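/- arXiv:1707.07570 — 5 statements merged into one kernel-verified Lean document; each statement's English description precedes it below -/
import Mathlib

section
/- Let $p>1$, $w<0$, $a>0$, $b\in\mathbb{R}$, and set $\alpha=a/(p+1)$, $\beta=b/p$. Assume $\alpha^2-\beta w>0$. Then the function $\phi(x)=\left[\frac{-w}{\alpha+\sqrt{\alpha^2-\beta w}\cosh((p-1)\sqrt{-w}\,x)}\right]^{1/(p-1)}$ satisfies the ordinary differential equation $\phi''(x)+w\phi(x)+a\phi(x)^p+b\phi(x)^{2p-1}=0$ for all $x\in\mathbb{R}$. -/
/-!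
With `q = 1/(p-1)`, `k = (p-1)√(-w)`, `D = √(α² - βw)` and `u = α + D cosh(kx) > 0` we have
`φ = (-w)^q u^(-q)`, and `u'' = k²(u - α)`, `u'² = k²(u² - 2αu + βw)` by `cosh² - sinh² = 1`.
Since `q p = q + 1` and `q(2p-1) = q + 2`, every term of the equation is `(-w)^q u^(-q-2)` times a
polynomial in `u`; their sum vanishes because `q(p-1) = 1`, `a = (p+1)α` and `b = pβ`.
-/

open Real

theorem deriv_deriv_const_mul_rpow {u u' : ℝ → ℝ} {u'' C r x : ℝ} (hu : ∀ y, u y ≠ 0)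
    (hu' : ∀ y, HasDerivAt u (u' y) y) (hu'' : HasDerivAt u' u'' x) :
    deriv (deriv fun y => C * u y ^ r) x =
      C * r * u x ^ (r - 2) * (u'' * u x + (r - 1) * u' x ^ 2) := by
  have hfirst : deriv (fun y => C * u y ^ r) = fun y => C * (u' y * r * u y ^ (r - 1)) :=
    funext fun y => (((hu' y).rpow_const (Or.inl (hu y))).const_mul C).deriv
  have hsecond : HasDerivAt (fun y => C * (u' y * r * u y ^ (r - 1)))
      (C * (u'' * r * u x ^ (r - 1) + u' x * r * (u' x * (r - 1) * u x ^ (r - 1 - 1)))) x :=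
    ((hu''.mul_const r).mul ((hu' x).rpow_const (Or.inl (hu x)))).const_mul C
  rw [hfirst, hsecond.deriv, show r - 1 = r - 2 + 1 by ring, rpow_add_one (hu x),
    show r - 2 + 1 - 1 = r - 2 by ring]
  ring

theorem hasDerivAt_const_add_mul_cosh (α D k y : ℝ) :
    HasDerivAt (fun y => α + D * cosh (k * y)) (D * k * sinh (k * y)) y := by
  have := ((hasDerivAt_cosh (k * y)).comp y ((hasDerivAt_id y).const_mul k)).const_mul D
  exact (this.const_add α).congr_deriv (by ring)

theorem hasDerivAt_const_mul_sinh (D k x : ℝ) :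
    HasDerivAt (fun y => D * k * sinh (k * y)) (D * k ^ 2 * cosh (k * x)) x := by
  have := ((hasDerivAt_sinh (k * x)).comp x ((hasDerivAt_id x).const_mul k)).const_mul (D * k)
  exact this.congr_deriv (by ring)

theorem mul_rpow_neg_rpow_eq {c v q s : ℝ} (hc : 0 < c) (hv : 0 < v) {m n : ℕ}
    (hs : q * s = q + m) (hmn : m + n = 2) :
    (c ^ q * v ^ (-q)) ^ s = c ^ q * v ^ (-q - 2) * (c ^ m * v ^ n) := by
  have hmn' : (m : ℝ) + n = 2 := by exact_mod_cast hmn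
  rw [mul_rpow (rpow_nonneg hc.le q) (rpow_nonneg hv.le _), ← rpow_mul hc.le, ← rpow_mul hv.le,
    neg_mul, hs, rpow_add hc, rpow_natCast, show -(q + m) = -q - 2 + n by
      linear_combination -hmn', rpow_add_natCast hv.ne']
  ring

/-- The equation for `φ`, divided by `(-w)^q u^(-q-2)` where `u = α + D cosh t`. -/
theorem reduced_ode_cosh_profile {p q w α β a b D k t : ℝ} (hq : q * (p - 1) = 1)
    (hk : k ^ 2 = -(p - 1) ^ 2 * w) (hD : D ^ 2 = α ^ 2 - β * w)
    (ha : a = (p + 1) * α) (hb : b = p * β) :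
    -q * (D * k ^ 2 * cosh t * (α + D * cosh t) + (-q - 1) * (D * k * sinh t) ^ 2)
      + w * (α + D * cosh t) ^ 2 - a * w * (α + D * cosh t) + b * w ^ 2 = 0 := by
  have hDsinh : (D * sinh t) ^ 2 = (α + D * cosh t) ^ 2 - 2 * α * (α + D * cosh t) + β * w := by
    linear_combination (-D ^ 2) * cosh_sq_sub_sinh_sq t - hD
  set v := α + D * cosh t
  linear_combination (q * (q + 1) * k ^ 2) * hDsinh
    + (-q * (D * cosh t) * v + q * (q + 1) * (v ^ 2 - 2 * α * v + β * w)) * hk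
    - w * (-(p - 1) * (v - α) * v + (q * (p - 1) + p) * (v ^ 2 - 2 * α * v + β * w)) * hq
    - w * v * ha + w ^ 2 * hb

theorem stmt_1 (p w a b : ℝ) (hp : 1 < p) (hw : w < 0) (ha : 0 < a)
    (α β : ℝ) (hαdef : α = a / (p + 1)) (hβdef : β = b / p)
    (hD : 0 < α ^ 2 - β * w)
    (φ : ℝ → ℝ)
    (hφ : φ = fun x : ℝ =>
      ((-w) / (α + Real.sqrt (α ^ 2 - β * w) *
        Real.cosh ((p - 1) * Real.sqrt (-w) * x))) ^ (1 / (p - 1))) :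
    ∀ x : ℝ,
      deriv (deriv φ) x + w * φ x + a * (φ x) ^ p + b * (φ x) ^ (2 * p - 1) = 0 := by
  intro x
  have hc : 0 < -w := neg_pos.2 hw
  have hα : 0 < α := hαdef ▸ by positivity
  have hq : 1 / (p - 1) * (p - 1) = 1 := one_div_mul_cancel (by linarith)
  set q := 1 / (p - 1)
  set k := (p - 1) * √(-w)
  set D := √(α ^ 2 - β * w)
  set u := fun y => α + D * cosh (k * y)
  have hu_pos (y : ℝ) : 0 < u y := add_pos_of_pos_of_nonneg hα (by positivity)
  have hφu : φ = fun y => (-w) ^ q * u y ^ (-q) := by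
    rw [hφ]; funext y
    rw [div_rpow hc.le (hu_pos y).le, rpow_neg (hu_pos y).le, div_eq_mul_inv]
  have hux : u x ^ (-q) = u x ^ (-q - 2) * u x ^ 2 := by
    rw [← rpow_add_natCast (hu_pos x).ne']; norm_num
  have hk : k ^ 2 = -(p - 1) ^ 2 * w := by rw [mul_pow, sq_sqrt hc.le]; ring
  have hD2 : D ^ 2 = α ^ 2 - β * w := sq_sqrt hD.le
  have ha' : a = (p + 1) * α := by rw [hαdef]; field_simp
  have hb' : b = p * β := by rw [hβdef]; field_simp
  rw [hφu]
  beta_reduce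
  rw [deriv_deriv_const_mul_rpow (fun y => (hu_pos y).ne') (hasDerivAt_const_add_mul_cosh α D k)
      (hasDerivAt_const_mul_sinh D k x),
    mul_rpow_neg_rpow_eq hc (hu_pos x) (m := 1) (n := 1) (by linear_combination hq) rfl,
    mul_rpow_neg_rpow_eq hc (hu_pos x) (m := 2) (n := 0)
      (by push_cast; linear_combination 2 * hq) rfl]
  linear_combination ((-w) ^ q * u x ^ (-q - 2)) *
      reduced_ode_cosh_profile (t := k * x) hq hk hD2 ha' hb' + w * (-w) ^ q * hux
end

section
/- Let $p>1$, $w<0$, $a>0$, $b\in\mathbb{R}$, $\alpha=a/(p+1)$, $\beta=b/p$, with $\alpha^2-\beta w>0$, and let $\phi$ be the function $\phi(x)=\left[\frac{-w}{\alpha+\sqrt{\alpha^2-\beta w}\cosh((p-1)\sqrt{-w}\,x)}\right]^{1/(p-1)}$. Then $\phi$ satisfies the first-order equation $(\phi'(x))^2+w\phi(x)^2+2\alpha\phi(x)^{p+1}+\beta\phi(x)^{2p}=0$ for all $x\in\mathbb{R}$. -/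
open Real Filter Set

theorem stmt_2 (p w a b : ℝ) (hp : 1 < p) (hw : w < 0) (ha : 0 < a)
    (α β : ℝ) (hαdef : α = a / (p + 1)) (hβdef : β = b / p)
    (hD : 0 < α ^ 2 - β * w)
    (φ : ℝ → ℝ)
    (hφ : φ = fun x : ℝ =>
      ((-w) / (α + Real.sqrt (α ^ 2 - β * w) *
        Real.cosh ((p - 1) * Real.sqrt (-w) * x))) ^ (1 / (p - 1))) :
    ∀ x : ℝ,
      (deriv φ x) ^ 2 + w * (φ x) ^ 2 + 2 * α * (φ x) ^ (p + 1)
        + β * (φ x) ^ (2 * p) = 0 := by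
  intro x
  have hp1 : (0:ℝ) < p - 1 := by linarith
  have hα : 0 < α := by rw [hαdef]; positivity
  set D := Real.sqrt (α ^ 2 - β * w) with hDdef
  have hD0 : 0 < D := Real.sqrt_pos.mpr hD
  have hDsq : D ^ 2 = α ^ 2 - β * w := Real.sq_sqrt hD.le
  set k := (p - 1) * Real.sqrt (-w) with hkdef
  have hwpos : 0 < -w := by linarith
  have hsw : Real.sqrt (-w) ^ 2 = -w := Real.sq_sqrt hwpos.le
  set U := α + D * Real.cosh (k * x) with hUdef
  have hU0 : 0 < U := by
    have h1 : 0 < Real.cosh (k * x) := Real.cosh_pos (k * x)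
    positivity
  set r := -w / U with hrdef
  have hr : 0 < r := div_pos hwpos hU0
  set c := 1 / (p - 1) with hcdef
  have hc1 : c * (p - 1) = 1 := by rw [hcdef]; field_simp
  -- derivative
  have hu : HasDerivAt (fun y => α + D * Real.cosh (k * y)) (D * (Real.sinh (k*x) * k)) x := by
    have h1 : HasDerivAt (fun y : ℝ => k * y) k x := by
      simpa using (hasDerivAt_id x).const_mul k
    have h2 : HasDerivAt (fun y => Real.cosh (k * y)) (Real.sinh (k*x) * k) x :=
      (Real.hasDerivAt_cosh (k*x)).comp x h1
    exact (h2.const_mul D).const_add α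
  have hg : HasDerivAt (fun y => -w / (α + D * Real.cosh (k * y)))
      (-w * (-(D * (Real.sinh (k*x) * k)) / U ^ 2)) x := by
    have := (hu.inv (ne_of_gt hU0)).const_mul (-w)
    simpa [div_eq_mul_inv] using this
  have hφd : HasDerivAt φ ((-w * (-(D * (Real.sinh (k*x) * k)) / U ^ 2)) * c * r ^ (c - 1)) x := by
    rw [hφ]
    exact hg.rpow_const (Or.inl (ne_of_gt hr))
  have hdval : deriv φ x = (-w * (-(D * (Real.sinh (k*x) * k)) / U ^ 2)) * c * r ^ (c - 1) :=
    hφd.deriv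
  have hφx : φ x = r ^ c := by rw [hφ]
  rw [hdval, hφx]
  -- rpow algebra
  have e1 : r ^ (c - 1) = r ^ c / r := by
    rw [Real.rpow_sub hr, Real.rpow_one]
  have e2 : (r ^ c) ^ (p + 1) = (r ^ c) ^ 2 * r := by
    rw [← Real.rpow_natCast (r ^ c) 2, ← Real.rpow_mul hr.le, ← Real.rpow_mul hr.le]
    push_cast
    rw [show c * (p + 1) = c * 2 + 1 by linear_combination hc1, Real.rpow_add hr,
      Real.rpow_one]
  have e3 : (r ^ c) ^ (2 * p) = (r ^ c) ^ 2 * (r * r) := by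
    rw [← Real.rpow_natCast (r ^ c) 2, ← Real.rpow_mul hr.le, ← Real.rpow_mul hr.le]
    push_cast
    rw [show c * (2 * p) = c * 2 + (1 + 1) by linear_combination 2 * hc1,
      Real.rpow_add hr, Real.rpow_add hr, Real.rpow_one]
  rw [e1, e2, e3]
  set T := r ^ c with hTdef
  set S := Real.sinh (k * x) with hSdef
  set C := Real.cosh (k * x) with hCdef
  have hsinh : S ^ 2 = C ^ 2 - 1 := by
    have := Real.cosh_sq (k * x); rw [← hSdef, ← hCdef] at this; linarith
  have hkc : k * c = Real.sqrt (-w) := by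
    rw [hkdef, hcdef, mul_one_div, mul_div_cancel_left₀ _ hp1.ne']
  have hUne : U ≠ 0 := hU0.ne'
  have hwne : w ≠ 0 := hw.ne
  clear_value D k U r c T S C
  have key : -w * D^2 * S^2 + w * U^2 - 2*α*w*U + β*w^2 = 0 := by
    rw [hsinh, hUdef]
    linear_combination w * hDsq
  have hsq : (-w * (-(D * (S * k)) / U ^ 2) * c * (T / r)) ^ 2
      = D^2 * S^2 * (-w) * w^2 * T^2 / (U^4 * r^2) := by
    have h0 : -w * (-(D * (S * k)) / U ^ 2) * c * (T / r)
        = w * D * S * (k * c) * T / (U ^ 2 * r) := by ring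
    rw [h0, hkc, div_pow]
    congr 1
    · linear_combination (w * D * S * T) ^ 2 * hsw
    · ring
  rw [hsq, hrdef]
  calc D ^ 2 * S ^ 2 * -w * w ^ 2 * T ^ 2 / (U ^ 4 * (-w / U) ^ 2) + w * T ^ 2
        + 2 * α * (T ^ 2 * (-w / U)) + β * (T ^ 2 * (-w / U * (-w / U)))
      = (T ^ 2 / U ^ 2) * (-w * D ^ 2 * S ^ 2 + w * U ^ 2 - 2 * α * w * U + β * w ^ 2) := by
        field_simp
        ring
    _ = 0 := by rw [key, mul_zero]
end

section
/- Let $p>1$, $w<0$, $\alpha>0$, $D>0$, and define $R(s)=\frac{D\sinh((p-1)\sqrt{-w}\,s)}{\alpha+D\cosh((p-1)\sqrt{-w}\,s)}$. Then $R$ is a bijection from $\mathbb{R}$ onto the open interval $(-1,1)$. -/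
open Real Filter Set

theorem stmt_6 (p w α D : ℝ) (hp : 1 < p) (hw : w < 0) (hα : 0 < α) (hD : 0 < D)
    (R : ℝ → ℝ)
    (hR : R = fun s : ℝ =>
      D * Real.sinh ((p - 1) * Real.sqrt (-w) * s) /
        (α + D * Real.cosh ((p - 1) * Real.sqrt (-w) * s))) :
    Set.BijOn R Set.univ (Set.Ioo (-1 : ℝ) 1) := by
  have hc : 0 < (p - 1) * Real.sqrt (-w) :=
    mul_pos (by linarith) (Real.sqrt_pos.mpr (by linarith))
  set c := (p - 1) * Real.sqrt (-w) with hcdef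
  have hden : ∀ u : ℝ, 0 < α + D * Real.cosh u := by
    intro u
    have h1 : (1:ℝ) ≤ Real.cosh u := Real.one_le_cosh u
    nlinarith
  subst hR
  refine ⟨?_, ?_, ?_⟩
  · intro s _
    simp only [Set.mem_Ioo]
    have hd := hden (c * s)
    constructor
    · rw [lt_div_iff₀ hd]
      have h1 := Real.sinh_add_cosh (c * s)
      have h2 := Real.exp_pos (c * s)
      nlinarith
    · rw [div_lt_one hd]
      have h1 := Real.cosh_sub_sinh (c * s)
      have h2 := Real.exp_pos (-(c * s))
      nlinarith
  · have hmono : StrictMono fun s : ℝ =>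
        D * Real.sinh (c * s) / (α + D * Real.cosh (c * s)) := by
      intro s t hst
      have huv : c * s < c * t := by
        exact mul_lt_mul_of_pos_left hst hc
      simp only
      rw [div_lt_div_iff₀ (hden _) (hden _)]
      have h1 : Real.sinh (c * s) < Real.sinh (c * t) := Real.sinh_lt_sinh.mpr huv
      have h2 : 0 < Real.sinh (c * t - c * s) := Real.sinh_pos_iff.mpr (by linarith)
      have h3 := Real.sinh_sub (c * t) (c * s)
      have h4 : 0 < Real.sinh (c * t) * Real.cosh (c * s) -
          Real.cosh (c * t) * Real.sinh (c * s) := by rw [← h3]; exact h2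
      have h5 : 0 < Real.sinh (c * t) - Real.sinh (c * s) := by linarith
      nlinarith [mul_pos (mul_pos hD hα) h5, mul_pos (mul_pos hD hD) h4]
    exact hmono.injective.injOn
  · intro y hy
    simp only [Set.mem_Ioo] at hy
    obtain ⟨hy1, hy2⟩ := hy
    have hy3 : 0 < 1 - y := by linarith
    set S := Real.sqrt (y ^ 2 * α ^ 2 + D ^ 2 * (1 - y ^ 2)) with hSdef
    have hyy : 0 < 1 - y ^ 2 := by nlinarith
    have hS2 : S ^ 2 = y ^ 2 * α ^ 2 + D ^ 2 * (1 - y ^ 2) :=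
      Real.sq_sqrt (by nlinarith [mul_nonneg (sq_nonneg y) (sq_nonneg α), mul_pos (pow_pos hD 2) hyy])
    have hSnn : 0 ≤ S := Real.sqrt_nonneg _
    have hnum : 0 < y * α + S := by
      nlinarith [hS2, hSnn, sq_nonneg (S + y * α), mul_pos (pow_pos hD 2) hyy]
    set e := (y * α + S) / (D * (1 - y)) with hedef
    have he : 0 < e := div_pos hnum (mul_pos hD hy3)
    have hq : D * (1 - y) * e ^ 2 = 2 * y * α * e + D * (1 + y) := by
      rw [hedef]
      field_simp
      nlinarith [hS2]
    refine ⟨Real.log e / c, Set.mem_univ _, ?_⟩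
    simp only
    have hcs : c * (Real.log e / c) = Real.log e := by
      field_simp
    rw [hcs]
    have hsinh : Real.sinh (Real.log e) = (e - e⁻¹) / 2 := by
      rw [Real.sinh_eq, Real.exp_log he, Real.exp_neg, Real.exp_log he]
    have hcosh : Real.cosh (Real.log e) = (e + e⁻¹) / 2 := by
      rw [Real.cosh_eq, Real.exp_log he, Real.exp_neg, Real.exp_log he]
    rw [hsinh, hcosh]
    have hd : 0 < α + D * ((e + e⁻¹) / 2) := by
      rw [← hcosh]; exact hden _
    rw [div_eq_iff (ne_of_gt hd)]
    have he0 : e ≠ 0 := ne_of_gt he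
    field_simp
    linear_combination hq
end

section
/- Let $p>1$, $w<0$, $Z\in\mathbb{R}$ with $Z^2/4<-w$, $a>0$, $b\in\mathbb{R}$, $\alpha=a/(p+1)$, $\beta=b/p$, $\alpha^2-\beta w>0$. Let $\phi$ solve $\phi''+w\phi+a\phi^p+b\phi^{2p-1}=0$ on $\mathbb{R}$ with $\phi>0$ decaying at infinity (the explicit cosh profile), and let $s=R^{-1}(-Z/(2\sqrt{-w}))$ where $R$ is the diffeomorphism $R(s)=\frac{\sqrt{\alpha^2-\beta w}\sinh((p-1)\sqrt{-w}\,s)}{\alpha+\sqrt{\alpha^2-\beta w}\cosh((p-1)\sqrt{-w}\,s)}$ from $\mathbb{R}$ onto $(-1,1)$. Then the even function $\phi_s(x)=\phi(|x|-s)$ satisfies the jump condition $\phi_s'(0^+)-\phi_s'(0^-)=-Z\phi_s(0)$. -/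
/-!
With `g(x) = α + √(α² - βw) cosh((p - 1) √(-w) x)`, the logarithmic derivative of
`φ = (-w / g) ^ (1 / (p - 1))` is `-g' / ((p - 1) g) = -√(-w) R`, so `φ' = -√(-w) R φ`. The even
function `x ↦ φ(|x| - s)` has one-sided slopes `±φ'(-s)` at `0`, and since `R` is odd their difference
`2 φ'(-s) = 2 √(-w) R(s) φ(-s)` equals `-Z φ(-s)` by the choice of `s`.
-/

open Real Filter Set Topology

section EvenExtension

variable {ψ : ℝ → ℝ}

theorem deriv_comp_abs_of_pos {x : ℝ} (hx : 0 < x) :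
    deriv (fun y => ψ |y|) x = deriv ψ x :=
  EventuallyEq.deriv_eq <| by
    filter_upwards [Ioi_mem_nhds hx] with y (hy : 0 < y)
    rw [abs_of_pos hy]

theorem deriv_comp_abs_of_neg {x : ℝ} (hx : x < 0) :
    deriv (fun y => ψ |y|) x = -deriv ψ (-x) := by
  rw [← deriv_comp_neg]
  refine EventuallyEq.deriv_eq ?_
  filter_upwards [Iio_mem_nhds hx] with y (hy : y < 0)
  rw [abs_of_neg hy]

theorem tendsto_deriv_comp_abs_nhdsGT (hψ : ContinuousAt (deriv ψ) 0) :
    Tendsto (deriv fun y => ψ |y|) (𝓝[>] 0) (𝓝 (deriv ψ 0)) :=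
  (hψ.tendsto.mono_left nhdsWithin_le_nhds).congr' <| by
    filter_upwards [self_mem_nhdsWithin] with x hx using (deriv_comp_abs_of_pos hx).symm

theorem tendsto_deriv_comp_abs_nhdsLT (hψ : ContinuousAt (deriv ψ) 0) :
    Tendsto (deriv fun y => ψ |y|) (𝓝[<] 0) (𝓝 (-deriv ψ 0)) := by
  have hneg : ContinuousAt (fun x => -deriv ψ (-x)) 0 :=
    (hψ.comp_of_eq continuous_neg.continuousAt neg_zero).neg
  have hlim : Tendsto (fun x => -deriv ψ (-x)) (𝓝[<] 0) (𝓝 (-deriv ψ 0)) := by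
    simpa using hneg.tendsto.mono_left nhdsWithin_le_nhds
  refine hlim.congr' ?_
  filter_upwards [self_mem_nhdsWithin] with x hx using (deriv_comp_abs_of_neg hx).symm

end EvenExtension

theorem HasDerivAt.const_div_rpow_const {g : ℝ → ℝ} {g' k r x : ℝ} (hg : HasDerivAt g g' x)
    (hk : k ≠ 0) (hgx : g x ≠ 0) :
    HasDerivAt (fun y => (k / g y) ^ r) (-(r * g' / g x) * (k / g x) ^ r) x := by
  have hquot : HasDerivAt (fun y => k / g y) (k * -(g' / g x ^ 2)) x := by
    simpa only [div_eq_mul_inv, neg_mul, Pi.inv_apply] using (hg.inv hgx).const_mul k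
  convert hquot.rpow_const (p := r) (Or.inl (div_ne_zero hk hgx)) using 1
  rw [rpow_sub_one (div_ne_zero hk hgx)]
  field_simp

theorem hasDerivAt_const_div_cosh_rpow {α D c k r x : ℝ} (hk : k ≠ 0)
    (hg : α + D * cosh (c * x) ≠ 0) :
    HasDerivAt (fun y => (k / (α + D * cosh (c * y))) ^ r)
      (-(r * c) * (D * sinh (c * x) / (α + D * cosh (c * x))) *
        (k / (α + D * cosh (c * x))) ^ r) x := by
  have hcosh : HasDerivAt (fun y => α + D * cosh (c * y)) (D * (sinh (c * x) * c)) x :=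
    (((hasDerivAt_id x).const_mul c).cosh.const_mul D).const_add α |>.congr_deriv (by simp)
  convert hcosh.const_div_rpow_const hk hg using 2
  ring

theorem stmt_8_general (p w a Z : ℝ) (hp : 1 < p) (hw : w < 0) (ha : 0 < a)
    (α β : ℝ) (hαdef : α = a / (p + 1))
    (hD : 0 < α ^ 2 - β * w)
    (φ R : ℝ → ℝ)
    (hφ : φ = fun x : ℝ =>
      ((-w) / (α + Real.sqrt (α ^ 2 - β * w) *
        Real.cosh ((p - 1) * Real.sqrt (-w) * x))) ^ (1 / (p - 1)))
    (hR : R = fun s : ℝ =>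
      Real.sqrt (α ^ 2 - β * w) * Real.sinh ((p - 1) * Real.sqrt (-w) * s) /
        (α + Real.sqrt (α ^ 2 - β * w) * Real.cosh ((p - 1) * Real.sqrt (-w) * s)))
    (s : ℝ) (hs : R s = -Z / (2 * Real.sqrt (-w)))
    (φs : ℝ → ℝ) (hφs : φs = fun x : ℝ => φ (|x| - s)) :
    ∃ Lp Lm : ℝ,
      Tendsto (deriv φs) (nhdsWithin 0 (Set.Ioi 0)) (nhds Lp) ∧
      Tendsto (deriv φs) (nhdsWithin 0 (Set.Iio 0)) (nhds Lm) ∧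
      Lp - Lm = -Z * φs 0 := by
  set t := √(-w)
  set D := √(α ^ 2 - β * w)
  have ht : 0 < t := sqrt_pos.2 (neg_pos.2 hw)
  have hα : 0 < α := hαdef ▸ div_pos ha (by linarith)
  have hD0 : 0 < D := sqrt_pos.2 hD
  have hg : ∀ x, 0 < α + D * cosh ((p - 1) * t * x) := fun x => by positivity
  have hφ' : ∀ x, HasDerivAt φ (-t * R x * φ x) x := by
    have hrc : 1 / (p - 1) * ((p - 1) * t) = t := by field_simp [(by linarith : p - 1 ≠ 0)]
    intro x
    subst hφ hR
    simpa only [hrc] using hasDerivAt_const_div_cosh_rpow (r := 1 / (p - 1))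
      (neg_ne_zero.2 hw.ne) (hg x).ne'
  have hderiv : deriv φ = fun x => -t * R x * φ x := funext fun x => (hφ' x).deriv
  have hφc : Continuous φ := continuous_iff_continuousAt.2 fun x => (hφ' x).continuousAt
  have hRc : Continuous R := hR ▸ Continuous.div (by fun_prop) (by fun_prop) fun x => (hg x).ne'
  set ψ := fun y => φ (y - s)
  have hψ' : deriv ψ = fun y => -t * R (y - s) * φ (y - s) := by
    funext y; rw [deriv_comp_sub_const, hderiv]
  have hψc : ContinuousAt (deriv ψ) 0 := by rw [hψ']; fun_prop
  have hRodd : R (-s) = -R s := by subst hR; simp only [mul_neg, sinh_neg, cosh_neg, neg_div]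
  subst hφs
  refine ⟨deriv ψ 0, -deriv ψ 0, tendsto_deriv_comp_abs_nhdsGT hψc,
    tendsto_deriv_comp_abs_nhdsLT hψc, ?_⟩
  simp only [hψ', zero_sub, abs_zero, hRodd, hs]
  field_simp
  ring

theorem stmt_8 (p w a b Z : ℝ) (hp : 1 < p) (hw : w < 0) (ha : 0 < a)
    (hZ : Z ^ 2 / 4 < -w)
    (α β : ℝ) (hαdef : α = a / (p + 1)) (hβdef : β = b / p)
    (hD : 0 < α ^ 2 - β * w)
    (φ R : ℝ → ℝ)
    (hφ : φ = fun x : ℝ =>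
      ((-w) / (α + Real.sqrt (α ^ 2 - β * w) *
        Real.cosh ((p - 1) * Real.sqrt (-w) * x))) ^ (1 / (p - 1)))
    (hR : R = fun s : ℝ =>
      Real.sqrt (α ^ 2 - β * w) * Real.sinh ((p - 1) * Real.sqrt (-w) * s) /
        (α + Real.sqrt (α ^ 2 - β * w) * Real.cosh ((p - 1) * Real.sqrt (-w) * s)))
    (s : ℝ) (hs : R s = -Z / (2 * Real.sqrt (-w)))
    (φs : ℝ → ℝ) (hφs : φs = fun x : ℝ => φ (|x| - s)) :
    ∃ Lp Lm : ℝ,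
      Tendsto (deriv φs) (nhdsWithin 0 (Set.Ioi 0)) (nhds Lp) ∧
      Tendsto (deriv φs) (nhdsWithin 0 (Set.Iio 0)) (nhds Lm) ∧
      Lp - Lm = -Z * φs 0 :=
  stmt_8_general p w a Z hp hw ha α β hαdef hD φ R hφ hR s hs φs hφs
end

section
/- Let $w<0$, $a>0$, $b\neq 0$, $p>1$, $Z\neq 0$, and suppose $s_0>0$ satisfies both $P(s_0)=0$ and $R(s_0)=0$, where $P(s)=\frac{Z^2}{8}s^2+\frac{w}{2}s^2+\frac{a}{p+1}s^{p+1}+\frac{b}{2p}s^{2p}$ and $R(s)=\frac{Z^2}{4}s+ws+as^p+bs^{2p-1}$. Then $s_0^{p-1}=-\frac{ap}{b(p+1)}$. -/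
open Real Filter Set

theorem stmt_15 (p w a b Z : ℝ) (hp : 1 < p) (hw : w < 0) (ha : 0 < a)
    (hb : b ≠ 0) (hZ : Z ≠ 0)
    (P R : ℝ → ℝ)
    (hP : P = fun s : ℝ =>
      Z ^ 2 / 8 * s ^ 2 + w / 2 * s ^ 2 + a / (p + 1) * s ^ (p + 1)
        + b / (2 * p) * s ^ (2 * p))
    (hRdef : R = fun s : ℝ =>
      Z ^ 2 / 4 * s + w * s + a * s ^ p + b * s ^ (2 * p - 1))
    (s0 : ℝ) (hs0 : 0 < s0) (hPs0 : P s0 = 0) (hRs0 : R s0 = 0) :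
    s0 ^ (p - 1) = -(a * p) / (b * (p + 1)) := by
  subst hP hRdef
  simp only at hPs0 hRs0
  have hp0 : p ≠ 0 := by linarith
  have hp1 : p + 1 ≠ 0 := by linarith
  have e1 : s0 ^ (p + 1) = s0 ^ p * s0 := by
    rw [rpow_add hs0, rpow_one]
  have e2 : s0 ^ (2 * p) = s0 ^ (2 * p - 1) * s0 := by
    rw [← rpow_add_one hs0.ne' (2 * p - 1)]
    norm_num
  have e3 : s0 ^ (2 * p) = s0 ^ (p + 1) * s0 ^ (p - 1) := by
    rw [← rpow_add hs0]
    ring_nf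
  have d1 : a / (p + 1) * (p + 1) = a := div_mul_cancel₀ a hp1
  have d2 : b / (2 * p) * (2 * p) = b := div_mul_cancel₀ b (by positivity : (2:ℝ) * p ≠ 0)
  rw [e1, e2] at hPs0
  have key0 : 16 * (1 - p) * (a * p * (s0 ^ p * s0) + b * (p + 1) * (s0 ^ (2 * p - 1) * s0)) = 0 := by
    linear_combination (32 * p * (p + 1)) * hPs0 - (16 * p * (p + 1) * s0) * hRs0
      - (32 * p * (s0 ^ p * s0)) * d1 - (16 * (p + 1) * (s0 ^ (2 * p - 1) * s0)) * d2
  rw [← e1, ← e2, e3] at key0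
  have hne : 16 * (1 - p) ≠ 0 := by
    intro h; nlinarith
  have key1 : a * p * s0 ^ (p + 1) + b * (p + 1) * (s0 ^ (p + 1) * s0 ^ (p - 1)) = 0 :=
    (mul_eq_zero.mp key0).resolve_left hne
  have hpow : (0:ℝ) < s0 ^ (p + 1) := rpow_pos_of_pos hs0 _
  have h : s0 ^ (p + 1) * (a * p + b * (p + 1) * s0 ^ (p - 1)) = 0 := by
    linear_combination key1
  have h2 : a * p + b * (p + 1) * s0 ^ (p - 1) = 0 :=
    (mul_eq_zero.mp h).resolve_left hpow.ne'
  have hbp : b * (p + 1) ≠ 0 := mul_ne_zero hb hp1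
  rw [eq_div_iff hbp]
  linarith
end
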